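/- (Lebesgue) Let p be a prime with p ≡ 3 (mod 8). Then ΣN − ΣR = ΣR_b − ΣN_b, where ΣR and ΣN are the sums of all quadratic residues and non-residues of p in [1, p−1], and ΣR_b, ΣN_b are the corresponding sums restricted to [1, (p−1)/2]. -/

import Mathlib

/-!
Write `p = 2h + 1` and `χ` for the Legendre symbol, and put `A = ∑_{y ≤ 2h} χ(y) y`,
`B = ∑_{y ≤ h} χ(y) y`, `C = ∑_{y ≤ h} χ(y)`; the claim is `A = -B`. Since `p ≡ 3 (mod 8)`,
`χ(-1) = χ(2) = -1`. Pairing `y` with `p - y` gives `A = 2B - pC`, while splitting `[1, 2h]` into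
the even numbers `2y` and the odd numbers `p - 2y` (`y ≤ h`) gives `A = pC - 4B`. Hence `A = -B`.
-/

open Finset

theorem Int.exists_sq_modEq_iff_isSquare {n : ℕ} {a : ℤ} :
    (∃ x : ℤ, x ^ 2 ≡ a [ZMOD n]) ↔ IsSquare (a : ZMod n) := by
  constructor
  · rintro ⟨x, hx⟩
    refine ⟨x, ?_⟩
    rw [← (ZMod.intCast_eq_intCast_iff _ _ n).mpr hx]
    push_cast
    ring
  · rintro ⟨r, hr⟩
    refine ⟨r.valMinAbs, (ZMod.intCast_eq_intCast_iff _ _ n).mp ?_⟩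
    rw [hr]
    push_cast
    ring

namespace legendreSym

variable (p : ℕ) [Fact p.Prime]

theorem eq_one_iff_exists_sq_modEq {a : ℤ} (ha0 : (a : ZMod p) ≠ 0) :
    legendreSym p a = 1 ↔ ∃ x : ℤ, x ^ 2 ≡ a [ZMOD p] := by
  rw [eq_one_iff p ha0, Int.exists_sq_modEq_iff_isSquare]

theorem eq_neg_one_iff_not_exists_sq_modEq {a : ℤ} :
    legendreSym p a = -1 ↔ ¬∃ x : ℤ, x ^ 2 ≡ a [ZMOD p] := by
  rw [eq_neg_one_iff p, Int.exists_sq_modEq_iff_isSquare]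

theorem sub_eq_neg_of_mod_four_eq_three (hp : p % 4 = 3) (a : ℤ) :
    legendreSym p (p - a) = -legendreSym p a := by
  have hp2 : p ≠ 2 := by omega
  rw [legendreSym.mod, show ((p : ℤ) - a) % p = (-1 * a) % p by simp,
    ← legendreSym.mod, legendreSym.mul, at_neg_one hp2, ZMod.χ₄_nat_three_mod_four hp]
  ring

theorem two_mul_eq_neg_of_mod_eight (hp : p % 8 = 3 ∨ p % 8 = 5) (a : ℤ) :
    legendreSym p (2 * a) = -legendreSym p a := by
  have hp2 : p ≠ 2 := by omega
  rw [legendreSym.mul, at_two hp2, ZMod.χ₈_nat_mod_eight, neg_eq_neg_one_mul]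
  congr 1
  rcases hp with hp | hp <;> rw [hp] <;> rfl

end legendreSym

theorem Finset.sum_filter_sub_sum_filter_not_eq_sum_mul {ι R : Type*} [Ring R] (s : Finset ι)
    (q : ι → Prop) [DecidablePred q] (χ f : ι → R) (hpos : ∀ i ∈ s, q i → χ i = 1)
    (hneg : ∀ i ∈ s, ¬q i → χ i = -1) :
    ∑ i ∈ s with q i, f i - ∑ i ∈ s with ¬q i, f i = ∑ i ∈ s, χ i * f i := by
  rw [← sum_filter_add_sum_filter_not s q, sub_eq_add_neg, ← sum_neg_distrib]
  congr 1 <;> refine sum_congr rfl fun i hi => ?_ <;> rw [mem_filter] at hi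
  · rw [hpos i hi.1 hi.2, one_mul]
  · rw [hneg i hi.1 hi.2, neg_one_mul]

theorem Finset.sum_Icc_two_mul_eq_add_sum_reflect {M : Type*} [AddCommMonoid M] (h : ℕ)
    (f : ℕ → M) :
    ∑ y ∈ Icc 1 (2 * h), f y =
      ∑ y ∈ Icc 1 h, f y + ∑ y ∈ Icc 1 h, f (2 * h + 1 - y) := by
  change ∑ y ∈ Ioc 0 (2 * h), f y =
    ∑ y ∈ Ioc 0 h, f y + ∑ y ∈ Ioc 0 h, f (2 * h + 1 - y)
  rw [← sum_Ioc_consecutive f h.zero_le (by omega : h ≤ 2 * h)]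
  congr 1
  refine sum_nbij' (2 * h + 1 - ·) (2 * h + 1 - ·) ?_ ?_ ?_ ?_ ?_ <;>
    · intro a ha
      simp only [mem_Ioc] at ha ⊢
      first | omega | (congr 1; omega)

theorem Finset.sum_Icc_two_mul_eq_add_sum_even_odd {M : Type*} [AddCommMonoid M] (h : ℕ)
    (f : ℕ → M) :
    ∑ y ∈ Icc 1 (2 * h), f y =
      ∑ y ∈ Icc 1 h, f (2 * y) + ∑ y ∈ Icc 1 h, f (2 * h + 1 - 2 * y) := by
  rw [← sum_filter_add_sum_filter_not (Icc 1 (2 * h)) Even f]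
  congr 1
  · refine sum_nbij' (· / 2) (2 * ·) ?_ ?_ ?_ ?_ ?_ <;>
      · intro a ha
        simp only [mem_filter, mem_Icc, Nat.even_iff] at ha ⊢
        first | omega | (congr 1; omega)
  · refine sum_nbij' (fun y => (2 * h + 1 - y) / 2) (fun y => 2 * h + 1 - 2 * y) ?_ ?_ ?_ ?_ ?_ <;>
      · intro a ha
        simp only [mem_filter, mem_Icc, Nat.even_iff] at ha ⊢
        first | omega | (congr 1; omega)

theorem sum_Icc_mul_eq_neg_of_reflect_of_two_mul (h : ℕ) (χ : ℕ → ℤ)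
    (hreflect : ∀ y ∈ Icc 1 (2 * h), χ (2 * h + 1 - y) = -χ y)
    (htwo_mul : ∀ y ∈ Icc 1 h, χ (2 * y) = -χ y) :
    ∑ y ∈ Icc 1 (2 * h), χ y * y = -∑ y ∈ Icc 1 h, χ y * y := by
  have hreflect_term : ∀ y ∈ Icc 1 h,
      χ (2 * h + 1 - y) * ((2 * h + 1 - y : ℕ) : ℤ) = χ y * y - (2 * h + 1) * χ y := by
    intro y hy
    rw [mem_Icc] at hy
    rw [hreflect y (mem_Icc.2 (by omega)), Nat.cast_sub (by omega)]
    push_cast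
    ring
  have heven_term : ∀ y ∈ Icc 1 h, χ (2 * y) * ((2 * y : ℕ) : ℤ) = -2 * (χ y * y) := by
    intro y hy
    rw [htwo_mul y hy]
    push_cast
    ring
  have hodd_term : ∀ y ∈ Icc 1 h,
      χ (2 * h + 1 - 2 * y) * ((2 * h + 1 - 2 * y : ℕ) : ℤ) =
        (2 * h + 1) * χ y - 2 * (χ y * y) := by
    intro y hy
    have hy_bounds := mem_Icc.1 hy
    rw [hreflect (2 * y) (mem_Icc.2 (by omega)), htwo_mul y hy, Nat.cast_sub (by omega)]
    push_cast
    ring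
  have hsplit_reflect := sum_Icc_two_mul_eq_add_sum_reflect h (fun y => χ y * y)
  have hsplit_parity := sum_Icc_two_mul_eq_add_sum_even_odd h (fun y => χ y * y)
  rw [sum_congr rfl hreflect_term, sum_sub_distrib, ← mul_sum] at hsplit_reflect
  rw [sum_congr rfl heven_term, sum_congr rfl hodd_term, sum_sub_distrib, ← mul_sum, ← mul_sum,
    ← mul_sum] at hsplit_parity
  linarith

open scoped Classical in
theorem legendreSym.sum_residues_sub_sum_nonresidues (p : ℕ) [Fact p.Prime] {n : ℕ}
    (hn : n < p) :
    ∑ y ∈ Icc 1 n with ∃ x : ℤ, x ^ 2 ≡ ((y : ℕ) : ℤ) [ZMOD p], ((y : ℕ) : ℤ) -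
      ∑ y ∈ Icc 1 n with ¬∃ x : ℤ, x ^ 2 ≡ ((y : ℕ) : ℤ) [ZMOD p], ((y : ℕ) : ℤ) =
    ∑ y ∈ Icc 1 n, legendreSym p y * y := by
  refine sum_filter_sub_sum_filter_not_eq_sum_mul _ _ _ _ (fun y hy hres => ?_)
    fun y _ hnres => (eq_neg_one_iff_not_exists_sq_modEq p).2 hnres
  have hy := mem_Icc.1 hy
  refine (eq_one_iff_exists_sq_modEq p ?_).2 hres
  rw [Int.cast_natCast, Ne, ZMod.natCast_eq_zero_iff]
  exact Nat.not_dvd_of_pos_of_lt hy.1 (by omega)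

open scoped Classical in
/-- (Lebesgue) For a prime `p ≡ 3 (mod 8)`:
`ΣN − ΣR = ΣR_b − ΣN_b`, where `ΣR`, `ΣN` are the sums of all residues /
non-residues in `[1, p-1]`, and `ΣR_b`, `ΣN_b` are the corresponding sums
restricted to `[1, (p-1)/2]`. -/
theorem sum_diff_eq_small_sum_diff_of_prime_mod_eight_eq_three
    (p : ℕ) (hp : p.Prime) (hmod : p % 8 = 3) :
    (∑ y ∈ (Finset.Icc 1 (p - 1)).filter
        (fun y => ¬ ∃ x : ℤ, x ^ 2 ≡ (y : ℤ) [ZMOD (p : ℤ)]), (y : ℤ)) -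
      (∑ y ∈ (Finset.Icc 1 (p - 1)).filter
        (fun y => ∃ x : ℤ, x ^ 2 ≡ (y : ℤ) [ZMOD (p : ℤ)]), (y : ℤ)) =
    (∑ y ∈ (Finset.Icc 1 ((p - 1) / 2)).filter
        (fun y => ∃ x : ℤ, x ^ 2 ≡ (y : ℤ) [ZMOD (p : ℤ)]), (y : ℤ)) -
      (∑ y ∈ (Finset.Icc 1 ((p - 1) / 2)).filter
        (fun y => ¬ ∃ x : ℤ, x ^ 2 ≡ (y : ℤ) [ZMOD (p : ℤ)]), (y : ℤ)) := by
  have : Fact p.Prime := ⟨hp⟩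
  -- the sums run over `Icc 1 n : Finset ℕ` lifted to `Finset ℤ` through the `Finset` monad
  simp only [bind_pure_comp, fmap_def, filter_image,
    sum_image fun _ _ _ _ h => Nat.cast_injective h]
  obtain ⟨h, rfl⟩ : ∃ h, p = 2 * h + 1 := ⟨p / 2, by omega⟩
  rw [show 2 * h + 1 - 1 = 2 * h by omega, show 2 * h / 2 = h by omega, ← neg_sub,
    legendreSym.sum_residues_sub_sum_nonresidues _ (by omega),
    legendreSym.sum_residues_sub_sum_nonresidues _ (by omega)]
  refine neg_eq_iff_eq_neg.2 <|
    sum_Icc_mul_eq_neg_of_reflect_of_two_mul h _ (fun y hy => ?_) fun y _ => ?_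
  · rw [Nat.cast_sub (by simp only [mem_Icc] at hy; omega)]
    exact legendreSym.sub_eq_neg_of_mod_four_eq_three _ (by omega) _
  · rw [Nat.cast_mul, Nat.cast_two, legendreSym.two_mul_eq_neg_of_mod_eight _ (.inl hmod)]
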